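/- Let λ be a regular cardinal and X a linearly ordered set with |X| = λ > 2^{ℵ_α}. Then X contains a λ-full subset of order type ω_{α+1} (or reverse order type ω_{α+1}), or a subset of order type λ (or reverse order type λ). -/

import Mathlib

open Cardinal Set

universe u

def FullRight {X : Type u} [LinearOrder X] (l : Cardinal.{u}) (Y : Set X) : Prop :=
  ∀ y ∈ Y, #{x : X | ∃ y' ∈ Y, y < y' ∧ y < x ∧ x < y'} = l

def FullLeft {X : Type u} [LinearOrder X] (l : Cardinal.{u}) (Y : Set X) : Prop :=
  ∀ y ∈ Y, #{x : X | ∃ y' ∈ Y, y' < y ∧ y' < x ∧ x < y} = l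

def CompletelyFull {X : Type u} [LinearOrder X] (l : Cardinal.{u}) (Y : Set X) : Prop :=
  ∀ y ∈ Y, ∀ y' ∈ Y, y < y' → #{x : X | y < x ∧ x < y'} = l

/-!
Call `x` and `y` near if fewer than `λ` points lie between them; for infinite `λ` this is an
equivalence relation.

If some class `C ∋ y` has `λ` elements, then `C ∩ [y, ∞)` or `C ∩ (-∞, y]` has `λ` elements while
all its initial (resp. final) segments are smaller than `λ`. By regularity every subset of size
`< λ` is then strictly bounded above (resp. below), and transfinite recursion gives a strictly
monotone (resp. antitone) sequence of type `λ`.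

Otherwise, by regularity there are more than `2 ^ ℵ_α` classes. Representatives of distinct
classes are far apart, so every monotone or antitone sequence of representatives is `λ`-full,
and one of type `ω_{α+1}` exists by the following Erdős–Rado type fact: a linear order `L` with
`|L| > 2 ^ κ` has a monotone or antitone sequence of type `κ⁺`. For each `x ∈ L` choose, by
recursion along `κ⁺`, points `t_x(i)` lying on the same side of every earlier `t_x(j)` as `x`.
If `x` is never chosen, `t_x` splits into a monotone and an antitone part, one of size `κ⁺`.
If every `x` is chosen at some stage, `x` is determined by that stage and by its sides relative
to the earlier points, so `|L| ≤ κ⁺ · 2 ^ κ = 2 ^ κ`.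
-/

section Recursion

variable {X : Type u} [LinearOrder X] {l : Cardinal.{u}}

theorem exists_strictMono_of_forall_exists_gt (H : ∀ s : Set X, #s < l → ∃ z, ∀ t ∈ s, t < z) :
    ∃ f : l.ord.ToType → X, StrictMono f := by
  have step : ∀ (i : l.ord.ToType) (prev : ∀ j, j < i → X), ∃ z, ∀ j (h : j < i), prev j h < z :=
    fun i prev ↦ (H (range fun j : Iio i ↦ prev j j.2)
      (mk_range_le.trans_lt (by simpa using mk_Iio_lt i (by simp)))).imp
      fun z hz j h ↦ hz _ ⟨⟨j, h⟩, rfl⟩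
  choose next hnext using step
  refine ⟨WellFoundedLT.fix next, fun j i hji ↦ ?_⟩
  rw [WellFoundedLT.fix_eq next i]
  exact hnext i (fun y _ ↦ WellFoundedLT.fix next y) j hji

theorem exists_strictMono_of_mk_Iic_lt (hl : l.IsRegular) (hX : l ≤ #X)
    (h : ∀ t : X, #(Iic t) < l) : ∃ f : l.ord.ToType → X, StrictMono f := by
  refine exists_strictMono_of_forall_exists_gt fun s hs ↦ ?_
  have hsmall : #(⋃ t ∈ s, Iic t) < l :=
    (card_biUnion_lt_iff_forall_of_isRegular hl hs).2 fun t _ ↦ h t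
  obtain ⟨z, hz⟩ : (⋃ t ∈ s, Iic t)ᶜ.Nonempty := by
    rw [nonempty_compl]
    intro huniv
    rw [huniv, mk_univ] at hsmall
    exact hsmall.not_ge hX
  exact ⟨z, fun t ht ↦ not_le.1 fun hzt ↦ hz (mem_biUnion ht hzt)⟩

theorem exists_strictAnti_of_mk_Ici_lt (hl : l.IsRegular) (hX : l ≤ #X)
    (h : ∀ t : X, #(Ici t) < l) : ∃ f : l.ord.ToType → X, StrictAnti f :=
  exists_strictMono_of_mk_Iic_lt (X := Xᵒᵈ) hl hX h

end Recursion

theorem exists_orderEmbedding_ord_toType {β : Type u} [LinearOrder β] [WellFoundedLT β]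
    {c : Cardinal.{u}} (h : c ≤ #β) : Nonempty (c.ord.ToType ↪o β) := by
  have : Ordinal.type (α := c.ord.ToType) (· < ·) ≤ Ordinal.type (α := β) (· < ·) := by
    rw [Ordinal.type_toType]
    exact (ord_le_ord.2 h).trans (ord_le_type _)
  obtain ⟨e⟩ := Ordinal.type_le_iff'.1 this
  exact ⟨e.orderEmbeddingOfLTEmbedding⟩

section Ramification

variable {L ι : Type*} [LinearOrder L] [Nonempty L] [LinearOrder ι] [WellFoundedLT ι]

noncomputable def ramify (x : L) : ι → L :=
  WellFoundedLT.fix fun i prev ↦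
    Classical.epsilon fun y ↦ ∀ j (h : j < i), y ≠ prev j h ∧ (y < prev j h ↔ x < prev j h)

theorem ramify_eq (x : L) (i : ι) :
    ramify x i = Classical.epsilon fun y ↦
      ∀ j < i, y ≠ ramify x j ∧ (y < ramify x j ↔ x < ramify x j) :=
  WellFoundedLT.fix_eq _ i

theorem ramify_spec {x : L} {i : ι} (h : ∀ j < i, ramify x j ≠ x) :
    ∀ j < i, ramify x i ≠ ramify x j ∧ (ramify x i < ramify x j ↔ x < ramify x j) := by
  rw [ramify_eq x i]
  exact Classical.epsilon_spec
    (p := fun y ↦ ∀ j < i, y ≠ ramify x j ∧ (y < ramify x j ↔ x < ramify x j))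
    ⟨x, fun j hj ↦ ⟨(h j hj).symm, Iff.rfl⟩⟩

-- The choice function is fixed once and for all, so `ramify x` depends on `x` only through the
-- sides of `x` relative to its earlier terms.
theorem ramify_congr (x x' : L) (i : ι)
    (h : ∀ j < i, (x < ramify x j ↔ x' < ramify x' j)) : ramify x i = ramify x' i := by
  induction i using WellFoundedLT.induction with
  | _ i ih =>
    have heq : ∀ j < i, ramify x j = ramify x' j :=
      fun j hj ↦ ih j hj fun k hk ↦ h k (hk.trans hj)
    rw [ramify_eq x i, ramify_eq x' i]
    congr 1
    ext y
    refine forall₂_congr fun j hj ↦ ?_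
    rw [h j hj, heq j hj]

end Ramification

theorem mk_le_mul_two_power_of_forall_exists_ramify_eq {L ι : Type u} [LinearOrder L]
    [Nonempty L] [LinearOrder ι] [WellFoundedLT ι] {κ : Cardinal.{u}}
    (hκ : ∀ i : ι, #(Iio i) ≤ κ) (h : ∀ x : L, ∃ i : ι, ramify x i = x) :
    #L ≤ #ι * 2 ^ κ := by
  choose δ hδ using h
  refine mk_le_mk_mul_of_mk_preimage_le δ fun d ↦ ?_
  have hinj : Function.Injective fun x : δ ⁻¹' {d} ↦ {j : Iio d | x.1 < ramify x.1 (j : ι)} := by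
    rintro ⟨x, rfl : δ x = d⟩ ⟨x', hx' : δ x' = δ x⟩ hxx'
    have hside : ∀ j < δ x, (x < ramify x j ↔ x' < ramify x' j) :=
      fun j hj ↦ Set.ext_iff.1 hxx' ⟨j, hj⟩
    ext
    calc x = ramify x (δ x) := (hδ x).symm
      _ = ramify x' (δ x) := ramify_congr x x' _ hside
      _ = x' := hx' ▸ hδ x'
  calc #(δ ⁻¹' {d}) ≤ #(Set (Iio d)) := mk_le_of_injective hinj
    _ = 2 ^ #(Iio d) := mk_set
    _ ≤ 2 ^ κ := power_le_power_left two_ne_zero (hκ d)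

theorem exists_strictMono_or_strictAnti_of_forall_lt_iff {μ : Cardinal.{u}} (hμ : ℵ₀ ≤ μ)
    {L : Type*} [LinearOrder L] (a : μ.ord.ToType → L) (x : L)
    (ha : ∀ j i, j < i → a i ≠ a j ∧ (a i < a j ↔ x < a j)) :
    ∃ f : μ.ord.ToType → L, StrictMono f ∨ StrictAnti f := by
  set S := {j | x < a j}
  have hsplit : μ ≤ #S ∨ μ ≤ #↥Sᶜ := by
    by_contra! hc
    have := mk_union_le S Sᶜ
    rw [union_compl_self, mk_univ, mk_ord_toType] at this
    exact this.not_gt (add_lt_of_lt hμ hc.1 hc.2)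
  rcases hsplit with hS | hS
  · obtain ⟨e⟩ := exists_orderEmbedding_ord_toType hS
    refine ⟨fun i ↦ a (e i), Or.inr fun j i hji ↦ ?_⟩
    exact (ha _ _ (e.strictMono hji)).2.2 (e j).2
  · obtain ⟨e⟩ := exists_orderEmbedding_ord_toType hS
    refine ⟨fun i ↦ a (e i), Or.inl fun j i hji ↦ ?_⟩
    obtain ⟨hne, hiff⟩ := ha _ _ (e.strictMono hji)
    exact lt_of_le_of_ne (not_lt.1 fun hlt ↦ (e j).2 (hiff.1 hlt)) hne.symm

theorem exists_strictMono_or_strictAnti_of_two_power_lt {κ : Cardinal.{u}} (hκ : ℵ₀ ≤ κ)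
    {L : Type u} [LinearOrder L] (hL : 2 ^ κ < #L) :
    ∃ f : (Order.succ κ).ord.ToType → L, StrictMono f ∨ StrictAnti f := by
  have : Nonempty L := mk_ne_zero_iff.1 (ne_bot_of_gt hL)
  by_cases h : ∀ x : L, ∃ i : (Order.succ κ).ord.ToType, ramify x i = x
  · have hIio (i : (Order.succ κ).ord.ToType) : #(Iio i) ≤ κ :=
      Order.lt_succ_iff.1 (by simpa using mk_Iio_lt i (by simp))
    have hcount := mk_le_mul_two_power_of_forall_exists_ramify_eq hIio h
    rw [mk_ord_toType, Cardinal.mul_eq_right (hκ.trans (cantor κ).le)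
      (Order.succ_le_of_lt (cantor κ)) (Cardinal.succ_ne_zero κ)] at hcount
    exact absurd hL hcount.not_gt
  · obtain ⟨x, hx⟩ := not_forall.1 h
    exact exists_strictMono_or_strictAnti_of_forall_lt_iff (hκ.trans (Order.le_succ κ))
      (ramify x) x fun j i hji ↦ ramify_spec (fun k _ ↦ not_exists.1 hx k) j hji

def nearSetoid (X : Type u) [LinearOrder X] {l : Cardinal.{u}} (hl : ℵ₀ ≤ l) : Setoid X where
  r x y := #(uIcc x y) < l
  iseqv :=
    { refl := fun x ↦ by simpa using one_lt_aleph0.trans_le hl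
      symm := fun h ↦ by rwa [uIcc_comm]
      trans := fun hxy hyz ↦ (mk_le_mk_of_subset uIcc_subset_uIcc_union_uIcc).trans_lt
        ((mk_union_le _ _).trans_lt (add_lt_of_lt hl hxy hyz)) }

section Nearness

variable {X : Type u} [LinearOrder X] {l : Cardinal.{u}}

theorem le_mk_Ioo_of_le_mk_Icc (hl : ℵ₀ ≤ l) {a b : X} (h : l ≤ #(Icc a b)) :
    l ≤ #(Ioo a b) := by
  by_contra! hlt
  have hfin : #(({a, b} : Set X)) < l := (toFinite _).lt_aleph0.trans_le hl
  refine h.not_gt ((mk_le_mk_of_subset fun x hx ↦ ?_).trans_lt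
    ((mk_union_le _ _).trans_lt (add_lt_of_lt hl hlt hfin)))
  rcases eq_or_lt_of_le hx.1 with rfl | hax
  · exact Or.inr (Or.inl rfl)
  rcases eq_or_lt_of_le hx.2 with rfl | hxb
  · exact Or.inr (Or.inr rfl)
  exact Or.inl ⟨hax, hxb⟩

theorem fullRight_range_of_strictMono {ι : Type*} [Preorder ι] [NoMaxOrder ι] {f : ι → X}
    (hf : StrictMono f) (hX : #X = l) (hfar : ∀ i j, i < j → l ≤ #(Ioo (f i) (f j))) :
    FullRight l (range f) := by
  rintro _ ⟨i, rfl⟩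
  obtain ⟨j, hij⟩ := exists_gt i
  exact le_antisymm (hX ▸ mk_set_le _) ((hfar i j hij).trans
    (mk_le_mk_of_subset fun x hx ↦ ⟨f j, mem_range_self j, hf hij, hx⟩))

theorem fullLeft_range_of_strictAnti {ι : Type*} [Preorder ι] [NoMaxOrder ι] {f : ι → X}
    (hf : StrictAnti f) (hX : #X = l) (hfar : ∀ i j, i < j → l ≤ #(Ioo (f j) (f i))) :
    FullLeft l (range f) := by
  rintro _ ⟨i, rfl⟩
  obtain ⟨j, hij⟩ := exists_gt i
  exact le_antisymm (hX ▸ mk_set_le _) ((hfar i j hij).trans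
    (mk_le_mk_of_subset fun x hx ↦ ⟨f j, mem_range_self j, hf hij, hx⟩))

theorem exists_strictMono_or_strictAnti_of_le_mk_near (hl : l.IsRegular) (y : X)
    (h : l ≤ #{x | #(uIcc x y) < l}) :
    ∃ f : l.ord.ToType → X, StrictMono f ∨ StrictAnti f := by
  set C := {x | #(uIcc x y) < l}
  have hsplit : l ≤ #↥(C ∩ Ici y) ∨ l ≤ #↥(C ∩ Iic y) := by
    by_contra! hc
    refine h.not_gt ((mk_le_mk_of_subset fun x hx ↦ ?_).trans_lt
      ((mk_union_le _ _).trans_lt (add_lt_of_lt hl.aleph0_le hc.1 hc.2)))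
    exact (le_total y x).imp (⟨hx, ·⟩) (⟨hx, ·⟩)
  have hsmall {U : Set X} (hU : U ⊆ C) (t : U) {s : Set U}
      (hs : ∀ z ∈ s, (z : X) ∈ uIcc (t : X) y) : #s < l :=
    ((mk_le_mk_of_subset hs).trans (mk_preimage_of_injective _ _ Subtype.val_injective)).trans_lt
      (hU t.2)
  rcases hsplit with hU | hV
  · obtain ⟨f, hf⟩ := exists_strictMono_of_mk_Iic_lt hl hU fun t ↦
      hsmall inter_subset_left t fun z (hz : z ≤ t) ↦ Icc_subset_uIcc' ⟨z.2.2, hz⟩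
    exact ⟨_, Or.inl ((Subtype.strictMono_coe _).comp hf)⟩
  · obtain ⟨f, hf⟩ := exists_strictAnti_of_mk_Ici_lt hl hV fun t ↦
      hsmall inter_subset_left t fun z (hz : t ≤ z) ↦ Icc_subset_uIcc ⟨hz, z.2.2⟩
    exact ⟨_, Or.inr ((Subtype.strictMono_coe _).comp_strictAnti hf)⟩

theorem exists_full_of_forall_mk_near_lt {κ : Cardinal.{u}} (hl : l.IsRegular) (hX : #X = l)
    (hκ : ℵ₀ ≤ κ) (hbig : 2 ^ κ < l) (h : ∀ y : X, #{x | #(uIcc x y) < l} < l) :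
    ∃ f : (Order.succ κ).ord.ToType → X,
      (StrictMono f ∧ FullRight l (range f)) ∨ (StrictAnti f ∧ FullLeft l (range f)) := by
  let s := nearSetoid X hl.aleph0_le
  set R := range (Quotient.out : Quotient s → X)
  have hR : 2 ^ κ < #R := by
    rw [mk_range_eq _ Quotient.out_injective]
    by_contra! hQ
    have hsmall : #(⋃ q : Quotient s, {x | ⟦x⟧ = q}) < l :=
      (card_iUnion_lt_iff_forall_of_isRegular hl (hQ.trans_lt hbig)).2 fun q ↦
        (mk_le_mk_of_subset fun x (hx : ⟦x⟧ = q) ↦ hx ▸ Setoid.symm (Quotient.mk_out x)).trans_lt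
          (h q.out)
    have hcover : (⋃ q : Quotient s, {x | ⟦x⟧ = q}) = Set.univ :=
      iUnion_eq_univ_iff.2 fun x ↦ ⟨⟦x⟧, rfl⟩
    rw [hcover, mk_univ, hX] at hsmall
    exact hsmall.false
  have hfar : ∀ u ∈ R, ∀ v ∈ R, u < v → l ≤ #(Ioo u v) := by
    rintro _ ⟨p, rfl⟩ _ ⟨q, rfl⟩ hpq
    refine le_mk_Ioo_of_le_mk_Icc hl.aleph0_le ?_
    rw [← uIcc_of_le hpq.le]
    exact not_lt.1 fun hnear ↦ hpq.ne (congrArg _ (Quotient.out_equiv_out.1 hnear))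
  have : NoMaxOrder (Order.succ κ).ord.ToType := Cardinal.noMaxOrder (hκ.trans (Order.le_succ κ))
  obtain ⟨f, hmono | hanti⟩ := exists_strictMono_or_strictAnti_of_two_power_lt hκ hR
  · have hf := (Subtype.strictMono_coe _).comp hmono
    exact ⟨_, Or.inl ⟨hf, fullRight_range_of_strictMono hf hX
      fun i j hij ↦ hfar _ (f i).2 _ (f j).2 (hmono hij)⟩⟩
  · have hf := (Subtype.strictMono_coe _).comp_strictAnti hanti
    exact ⟨_, Or.inr ⟨hf, fullLeft_range_of_strictAnti hf hX
      fun i j hij ↦ hfar _ (f j).2 _ (f i).2 (hanti hij)⟩⟩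

end Nearness

/-- Corollary 3.4: a linear order of regular cardinality `l > 2 ^ ℵ_α` has an
`l`-full subset of order type `ω_{α+1}` (or its reverse), or a subset of order
type `l` (or its reverse). -/
theorem stmt11 (α : Ordinal.{u}) (l : Cardinal.{u}) (hl : l.IsRegular)
    (X : Type u) [LinearOrder X] (hX : #X = l)
    (hbig : 2 ^ Cardinal.aleph α < l) :
    (∃ f : (Cardinal.aleph (α + 1)).ord.ToType → X,
        (StrictMono f ∧ FullRight l (Set.range f)) ∨
        (StrictAnti f ∧ FullLeft l (Set.range f))) ∨
    (∃ f : l.ord.ToType → X, StrictMono f ∨ StrictAnti f) := by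
  by_cases hnear : ∃ y : X, l ≤ #{x | #(uIcc x y) < l}
  · obtain ⟨y, hy⟩ := hnear
    exact Or.inr (exists_strictMono_or_strictAnti_of_le_mk_near hl y hy)
  · simp only [not_exists, not_le] at hnear
    rw [← succ_aleph]
    exact Or.inl (exists_full_of_forall_mk_near_lt hl hX (aleph0_le_aleph α) hbig hnear)
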